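/- arXiv:1811.06750 — 4 statements merged into one kernel-verified Lean document; each statement's English description precedes it below -/
import Mathlib

section
/- Let a ∈ ℝ, δ₀ > 0, and let f, g : [a, a + δ₀] → ℝ be continuous functions with g(a) = 0, g(y) > 0 for all y ∈ (a, a + δ₀], f(a) = 0, and f, g differentiable at a (from the right) with g'(a) > 0. Then there exists δ ∈ (0, δ₀] such that the iterated integral I(δ) := ∫ₐ^{a+δ} ∫ₓ^{a+δ} (1/g(y)) · exp(∫ₓ^y f(s)/g(s) ds) dy dx is finite. -/
/-!
Since `f a = g a = 0`, the quotients `f y / (y - a)` and `g y / (y - a)` are slopes at `a`, so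
they tend to `f'` and `g' > 0`. Hence near `a` we have `g y ≥ g' (y - a) / 2` and `f / g` is
bounded, so the exponential factor is bounded and the integrand is `O(1 / (y - a))`. The
iterated integral of `1 / (y - a)` over `a < x < y ≤ b` is finite: bounding it by
`(x - a)^(-1/2) (y - a)^(-1/2)` splits it into a product of two convergent integrals.
-/

open MeasureTheory Set Filter Topology

theorem tendsto_div_sub_nhdsGT_of_hasDerivWithinAt {f : ℝ → ℝ} {f' a : ℝ} (hfa : f a = 0)
    (hf : HasDerivWithinAt f f' (Ioi a) a) :
    Tendsto (fun y => f y / (y - a)) (𝓝[>] a) (𝓝 f') := by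
  refine ((hasDerivWithinAt_iff_tendsto_slope' self_notMem_Ioi).mp hf).congr fun y => ?_
  rw [slope_def_field, hfa, sub_zero]

theorem tendsto_div_nhdsGT_of_hasDerivWithinAt {f g : ℝ → ℝ} {f' g' a : ℝ}
    (hfa : f a = 0) (hga : g a = 0) (hf : HasDerivWithinAt f f' (Ioi a) a)
    (hg : HasDerivWithinAt g g' (Ioi a) a) (hg' : g' ≠ 0) :
    Tendsto (fun y => f y / g y) (𝓝[>] a) (𝓝 (f' / g')) := by
  refine ((tendsto_div_sub_nhdsGT_of_hasDerivWithinAt hfa hf).div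
    (tendsto_div_sub_nhdsGT_of_hasDerivWithinAt hga hg) hg').congr' ?_
  filter_upwards [self_mem_nhdsWithin] with y (hy : a < y)
  rw [Pi.div_apply, div_div_div_cancel_right₀ (sub_ne_zero.mpr hy.ne')]

theorem eventually_mul_sub_lt_nhdsGT_of_hasDerivWithinAt {g : ℝ → ℝ} {g' a c : ℝ}
    (hga : g a = 0) (hg : HasDerivWithinAt g g' (Ioi a) a) (hc : c < g') :
    ∀ᶠ y in 𝓝[>] a, c * (y - a) < g y := by
  filter_upwards [(tendsto_div_sub_nhdsGT_of_hasDerivWithinAt hga hg).eventually_const_lt hc,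
    self_mem_nhdsWithin] with y hy (hay : a < y)
  rwa [lt_div_iff₀ (sub_pos.mpr hay)] at hy

theorem lintegral_Ioc_rpow_sub_lt_top (a b : ℝ) {r : ℝ} (hr : -1 < r) :
    ∫⁻ t in Ioc a b, ENNReal.ofReal ((t - a) ^ r) < ⊤ := by
  have h : IntervalIntegrable (fun t => (t - a) ^ r) volume a b := by
    simpa using
      (intervalIntegral.intervalIntegrable_rpow' hr (a := 0) (b := b - a)).comp_sub_right a
  exact h.1.setLIntegral_lt_top

theorem inv_sub_le_rpow_mul_rpow {a x y : ℝ} (hx : a < x) (hxy : x ≤ y) :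
    (y - a)⁻¹ ≤ (x - a) ^ (-(1 / 2) : ℝ) * (y - a) ^ (-(1 / 2) : ℝ) := by
  have hxa : 0 < x - a := sub_pos.mpr hx
  have hya : 0 < y - a := by linarith
  calc (y - a)⁻¹ = (y - a) ^ (-(1 / 2) : ℝ) * (y - a) ^ (-(1 / 2) : ℝ) := by
        rw [← Real.rpow_add hya]; norm_num [Real.rpow_neg_one]
    _ ≤ (x - a) ^ (-(1 / 2) : ℝ) * (y - a) ^ (-(1 / 2) : ℝ) := by
        gcongr ?_ * _
        exact Real.rpow_le_rpow_of_nonpos hxa (by linarith) (by norm_num)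

theorem lintegral_Ioc_lintegral_Ioc_inv_sub_lt_top (a b : ℝ) :
    ∫⁻ x in Ioc a b, ∫⁻ y in Ioc x b, ENNReal.ofReal (y - a)⁻¹ < ⊤ := by
  set r : ℝ → ENNReal := fun t => ENNReal.ofReal ((t - a) ^ (-(1 / 2) : ℝ))
  set L := ∫⁻ t in Ioc a b, r t
  have hL : L < ⊤ := lintegral_Ioc_rpow_sub_lt_top a b (by norm_num)
  have inner : ∀ x ∈ Ioc a b, ∫⁻ y in Ioc x b, ENNReal.ofReal (y - a)⁻¹ ≤ r x * L := by
    intro x hx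
    calc ∫⁻ y in Ioc x b, ENNReal.ofReal (y - a)⁻¹ ≤ ∫⁻ y in Ioc x b, r x * r y := by
          refine setLIntegral_mono' measurableSet_Ioc fun y hy => ?_
          rw [← ENNReal.ofReal_mul (Real.rpow_nonneg (sub_nonneg.mpr hx.1.le) _)]
          exact ENNReal.ofReal_le_ofReal (inv_sub_le_rpow_mul_rpow hx.1 hy.1.le)
      _ = r x * ∫⁻ y in Ioc x b, r y := lintegral_const_mul' _ _ ENNReal.ofReal_ne_top
      _ ≤ r x * L := by gcongr; exact lintegral_mono_set (Ioc_subset_Ioc_left hx.1.le)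
  calc ∫⁻ x in Ioc a b, ∫⁻ y in Ioc x b, ENNReal.ofReal (y - a)⁻¹
      ≤ ∫⁻ x in Ioc a b, r x * L := setLIntegral_mono' measurableSet_Ioc inner
    _ = L * L := by rw [lintegral_mul_const' _ _ hL.ne]
    _ < ⊤ := ENNReal.mul_lt_top hL hL

theorem integral_le_mul_of_abs_le {q : ℝ → ℝ} {a b x y M : ℝ} (hx : a < x) (hxy : x ≤ y)
    (hy : y ≤ b) (hq : ∀ s ∈ Ioc a b, |q s| ≤ M) :
    ∫ s in x..y, q s ≤ M * (b - a) := by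
  have hM : 0 ≤ M := (abs_nonneg _).trans (hq y ⟨hx.trans_le hxy, hy⟩)
  calc ∫ s in x..y, q s ≤ ‖∫ s in x..y, q s‖ := Real.le_norm_self _
    _ ≤ M * |y - x| := intervalIntegral.norm_integral_le_of_norm_le_const fun s hs => by
        rw [uIoc_of_le hxy] at hs
        exact hq s ⟨hx.trans hs.1, hs.2.trans hy⟩
    _ ≤ M * (b - a) := by
        gcongr
        rw [abs_of_nonneg (sub_nonneg.mpr hxy)]
        linarith

theorem speed_scale_lintegral_lt_top_of_bounds {g q : ℝ → ℝ} {a b c M : ℝ} (hc : 0 < c)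
    (hg : ∀ y ∈ Ioc a b, c * (y - a) ≤ g y) (hq : ∀ s ∈ Ioc a b, |q s| ≤ M) :
    ∫⁻ x in Ioc a b, ∫⁻ y in Ioc x b,
      ENNReal.ofReal ((1 / g y) * Real.exp (∫ s in x..y, q s)) < ⊤ := by
  set K := Real.exp (M * (b - a)) / c with hK
  have pointwise : ∀ x ∈ Ioc a b, ∀ y ∈ Ioc x b,
      ENNReal.ofReal ((1 / g y) * Real.exp (∫ s in x..y, q s))
        ≤ ENNReal.ofReal K * ENNReal.ofReal (y - a)⁻¹ := by
    intro x hx y hy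
    have hya : 0 < y - a := by linarith [hx.1, hy.1]
    rw [← ENNReal.ofReal_mul (by positivity)]
    refine ENNReal.ofReal_le_ofReal ?_
    calc (1 / g y) * Real.exp (∫ s in x..y, q s)
        ≤ 1 / (c * (y - a)) * Real.exp (M * (b - a)) := by
          gcongr
          · exact hg y ⟨by linarith, hy.2⟩
          · exact integral_le_mul_of_abs_le hx.1 hy.1.le hy.2 hq
      _ = K * (y - a)⁻¹ := by rw [hK]; field_simp
  calc ∫⁻ x in Ioc a b, ∫⁻ y in Ioc x b,
        ENNReal.ofReal ((1 / g y) * Real.exp (∫ s in x..y, q s))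
      ≤ ∫⁻ x in Ioc a b, ENNReal.ofReal K * ∫⁻ y in Ioc x b, ENNReal.ofReal (y - a)⁻¹ := by
        refine setLIntegral_mono' measurableSet_Ioc fun x hx => ?_
        rw [← lintegral_const_mul' _ _ ENNReal.ofReal_ne_top]
        exact setLIntegral_mono' measurableSet_Ioc (pointwise x hx)
    _ = ENNReal.ofReal K * ∫⁻ x in Ioc a b, ∫⁻ y in Ioc x b, ENNReal.ofReal (y - a)⁻¹ :=
        lintegral_const_mul' _ _ ENNReal.ofReal_ne_top
    _ < ⊤ := ENNReal.mul_lt_top ENNReal.ofReal_lt_top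
        (lintegral_Ioc_lintegral_Ioc_inv_sub_lt_top a b)

theorem speed_scale_integral_finite_of_drift_zero_general (a δ₀ : ℝ) (hδ₀ : 0 < δ₀)
    (f g : ℝ → ℝ) (f' g' : ℝ)
    (hga : g a = 0) (hfa : f a = 0)
    (hf : HasDerivWithinAt f f' (Set.Ici a) a)
    (hg : HasDerivWithinAt g g' (Set.Ici a) a)
    (hg' : 0 < g') :
    ∃ δ, 0 < δ ∧ δ ≤ δ₀ ∧
      (∫⁻ x in Set.Ioc a (a + δ), ∫⁻ y in Set.Ioc x (a + δ),
        ENNReal.ofReal ((1 / g y) * Real.exp (∫ s in x..y, f s / g s))) < ⊤ := by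
  have hg_lower := eventually_mul_sub_lt_nhdsGT_of_hasDerivWithinAt hga hg.Ioi_of_Ici
    (half_lt_self hg')
  have hfg_bounded := ((tendsto_div_nhdsGT_of_hasDerivWithinAt hfa hga hf.Ioi_of_Ici
    hg.Ioi_of_Ici hg'.ne').abs.eventually_lt_const (lt_add_one |f' / g'|))
  obtain ⟨u, hau, hu⟩ := mem_nhdsGT_iff_exists_Ioc_subset.mp (hg_lower.and hfg_bounded)
  have hδ : 0 < min δ₀ (u - a) := lt_min hδ₀ (sub_pos.mpr hau)
  have hsub : Ioc a (a + min δ₀ (u - a)) ⊆ Ioc a u :=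
    Ioc_subset_Ioc_right (by linarith [min_le_right δ₀ (u - a)])
  exact ⟨_, hδ, min_le_left _ _, speed_scale_lintegral_lt_top_of_bounds (half_pos hg')
    (fun y hy => (hu (hsub hy)).1.le) (fun s hs => (hu (hsub hs)).2.le)⟩

/-- Accessibility of the boundary in the case `f a = 0`: the speed/scale iterated
integral `I(δ) = ∫ₐ^{a+δ} ∫ₓ^{a+δ} (1/g(y)) exp(∫ₓ^y f/g) dy dx` is finite for some
`δ ∈ (0, δ₀]`. -/
theorem speed_scale_integral_finite_of_drift_zero (a δ₀ : ℝ) (hδ₀ : 0 < δ₀)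
    (f g : ℝ → ℝ) (f' g' : ℝ)
    (hfc : ContinuousOn f (Set.Icc a (a + δ₀)))
    (hgc : ContinuousOn g (Set.Icc a (a + δ₀)))
    (hga : g a = 0) (hfa : f a = 0)
    (hgpos : ∀ y ∈ Set.Ioc a (a + δ₀), 0 < g y)
    (hf : HasDerivWithinAt f f' (Set.Ici a) a)
    (hg : HasDerivWithinAt g g' (Set.Ici a) a)
    (hg' : 0 < g') :
    ∃ δ, 0 < δ ∧ δ ≤ δ₀ ∧
      (∫⁻ x in Set.Ioc a (a + δ), ∫⁻ y in Set.Ioc x (a + δ),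
        ENNReal.ofReal ((1 / g y) * Real.exp (∫ s in x..y, f s / g s))) < ⊤ :=
  speed_scale_integral_finite_of_drift_zero_general a δ₀ hδ₀ f g f' g' hga hfa hf hg hg'
end

section
/- Let a ∈ ℝ, δ₀ > 0, and let f, g : [a, a + δ₀] → ℝ with f continuous, f differentiable at a (from the right), f(a) > 0, g twice continuously differentiable, g(a) = 0, g'(a) > 0, and g(y) > 0 for all y ∈ (a, a + δ₀]. If f(a) ≥ g'(a), then for every sufficiently small δ ∈ (0, δ₀] the iterated integral I(δ) := ∫ₐ^{a+δ} ∫ₓ^{a+δ} (1/g(y)) · exp(∫ₓ^y f(s)/g(s) ds) dy dx is infinite. -/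
/-!
Near `a`, the derivative of `f` at `a` and the second-order Taylor bound
`g s ≤ g' (s - a) + C (s - a)²` give `f s / g s ≥ (s - a)⁻¹ - M` for some constant `M`;
this is where `g' ≤ f a` enters, and in the borderline case `f a = g'` the bounded error term
is essential. Hence `exp (∫ₓ^y f/g) ≥ e^{-M δ} (y - a)/(x - a)`, and since
`g y ≤ 2 g' (y - a)` the integrand is at least `K / (x - a)` for `x < y`, which is not
integrable at `a`.
-/

open MeasureTheory Set Filter Topology

lemma HasDerivWithinAt.eventually_mul_sub_le_sub {f : ℝ → ℝ} {f' a c : ℝ}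
    (hf : HasDerivWithinAt f f' (Ici a) a) (hc : c < f') :
    ∀ᶠ s in 𝓝[>] a, c * (s - a) ≤ f s - f a := by
  have hslope : Tendsto (slope f a) (𝓝[>] a) (𝓝 f') :=
    (hasDerivWithinAt_iff_tendsto_slope' (lt_irrefl a)).1 hf.Ioi_of_Ici
  filter_upwards [hslope.eventually (eventually_ge_nhds hc), self_mem_nhdsWithin] with s hs has
  rwa [slope_def_field, le_div_iff₀ (sub_pos.2 has)] at hs

lemma HasDerivWithinAt.eventually_sub_le_mul_sub {f : ℝ → ℝ} {f' a c : ℝ}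
    (hf : HasDerivWithinAt f f' (Ici a) a) (hc : f' < c) :
    ∀ᶠ s in 𝓝[>] a, f s - f a ≤ c * (s - a) := by
  filter_upwards [hf.neg.eventually_mul_sub_le_sub (neg_lt_neg hc)] with s hs
  simp only [Pi.neg_apply] at hs
  linarith

lemma ContDiffOn.exists_sub_le_mul_sub_add_mul_sq {g : ℝ → ℝ} {a b g' : ℝ} (hab : a < b)
    (hg : ContDiffOn ℝ 2 g (Icc a b)) (hg' : HasDerivWithinAt g g' (Ici a) a) :
    ∃ C, 0 ≤ C ∧ ∀ s ∈ Icc a b, g s - g a ≤ g' * (s - a) + C * (s - a) ^ 2 := by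
  obtain ⟨C, hC⟩ := exists_taylor_mean_remainder_bound (n := 1) hab.le hg
  have hderiv : derivWithin g (Icc a b) a = g' :=
    (hg'.mono Icc_subset_Ici_self).derivWithin (uniqueDiffOn_Icc hab a (left_mem_Icc.2 hab.le))
  refine ⟨max C 0, le_max_right _ _, fun s hs => ?_⟩
  have hs' := (abs_le.1 (hC s hs)).2
  norm_num [hderiv] at hs'
  nlinarith [le_max_left C 0, sq_nonneg (s - a)]

lemma exists_eventually_inv_sub_le_div {f g : ℝ → ℝ} {a b f' g' : ℝ} (hab : a < b)
    (hf : HasDerivWithinAt f f' (Ici a) a) (hgC2 : ContDiffOn ℝ 2 g (Icc a b)) (hga : g a = 0)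
    (hg : HasDerivWithinAt g g' (Ici a) a) (hg' : 0 < g') (hcond : g' ≤ f a) :
    ∃ M, 0 ≤ M ∧ ∀ᶠ s in 𝓝[>] a,
      0 < g s ∧ g s ≤ 2 * g' * (s - a) ∧ (s - a)⁻¹ - M ≤ f s / g s := by
  obtain ⟨C, hC, hTaylor⟩ := hgC2.exists_sub_le_mul_sub_add_mul_sq hab hg
  set L := |f'| + 1
  have hflow := hf.eventually_mul_sub_le_sub (c := -L) (by linarith [neg_abs_le f'])
  have hglow := hg.eventually_mul_sub_le_sub (half_lt_self hg')
  have hgup := hg.eventually_sub_le_mul_sub (show g' < 2 * g' by linarith)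
  refine ⟨(L + C) / (g' / 2), by positivity, ?_⟩
  filter_upwards [hflow, hglow, hgup, Ioc_mem_nhdsGT hab] with s hfs hgl hgu hs
  have ht : 0 < s - a := sub_pos.2 hs.1
  have hgT := hTaylor s (Ioc_subset_Icc_self hs)
  rw [hga, sub_zero] at hgl hgu hgT
  have hgs : 0 < g s := (mul_pos (half_pos hg') ht).trans_le hgl
  have hdiv : g s * (s - a)⁻¹ ≤ g' + C * (s - a) := by
    rw [← div_eq_mul_inv, div_le_iff₀ ht]; nlinarith
  have hM : (L + C) * (s - a) ≤ (L + C) / (g' / 2) * g s := by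
    rw [div_mul_eq_mul_div, le_div_iff₀ (half_pos hg')]
    nlinarith [mul_le_mul_of_nonneg_left hgl (show 0 ≤ L + C by positivity)]
  refine ⟨hgs, hgu, ?_⟩
  -- `g s / (s - a) - M g s ≤ g' + C (s - a) - (L + C) (s - a) ≤ f a - L (s - a) ≤ f s`
  rw [le_div_iff₀ hgs]
  nlinarith

lemma lintegral_Ioc_inv_sub_eq_top {a b : ℝ} (hab : a < b) :
    ∫⁻ x in Ioc a b, ENNReal.ofReal (x - a)⁻¹ = ⊤ := by
  by_contra h
  have hint : IntegrableOn (fun x : ℝ => (x - a)⁻¹) (Ioc a b) := by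
    refine (lintegral_ofReal_ne_top_iff_integrable
      (measurable_id.sub_const a).inv.aestronglyMeasurable ?_).1 h
    filter_upwards [ae_restrict_mem measurableSet_Ioc] with x hx
    exact inv_nonneg.2 (sub_nonneg.2 hx.1.le)
  rcases intervalIntegrable_sub_inv_iff.1
    ((intervalIntegrable_iff_integrableOn_Ioc_of_le hab.le).2 hint) with h | h
  · exact hab.ne h
  · exact h left_mem_uIcc

lemma lintegral_Ioc_lintegral_Ioc_eq_top {F : ℝ → ℝ → ℝ} {a b K : ℝ} (hab : a < b)
    (hK : 0 < K)
    (hF : ∀ x y, a < x → x < y → y ≤ b → K / (x - a) ≤ F x y) :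
    ∫⁻ x in Ioc a b, ∫⁻ y in Ioc x b, ENNReal.ofReal (F x y) = ⊤ := by
  have hinner : ∀ x ∈ Ioc a ((a + b) / 2),
      ENNReal.ofReal (K * ((b - a) / 2)) * ENNReal.ofReal (x - a)⁻¹ ≤
        ∫⁻ y in Ioc x b, ENNReal.ofReal (F x y) := by
    intro x hx
    calc ENNReal.ofReal (K * ((b - a) / 2)) * ENNReal.ofReal (x - a)⁻¹
        = ENNReal.ofReal (K / (x - a)) * ENNReal.ofReal ((b - a) / 2) := by
          have hxa : 0 < x - a := sub_pos.2 hx.1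
          rw [← ENNReal.ofReal_mul (by nlinarith), ← ENNReal.ofReal_mul (by positivity)]
          ring_nf
      _ ≤ ENNReal.ofReal (K / (x - a)) * volume (Ioc x b) := by
          rw [Real.volume_Ioc]; gcongr; linarith [hx.2]
      _ = ∫⁻ _ in Ioc x b, ENNReal.ofReal (K / (x - a)) := (setLIntegral_const _ _).symm
      _ ≤ _ := setLIntegral_mono' measurableSet_Ioc fun y hy =>
          ENNReal.ofReal_le_ofReal (hF x y hx.1 hy.1 hy.2)
  refine top_unique ?_
  calc ⊤ = ∫⁻ x in Ioc a ((a + b) / 2),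
        ENNReal.ofReal (K * ((b - a) / 2)) * ENNReal.ofReal (x - a)⁻¹ := by
        rw [lintegral_const_mul' _ _ ENNReal.ofReal_ne_top,
          lintegral_Ioc_inv_sub_eq_top (by linarith),
          ENNReal.mul_top (ENNReal.ofReal_pos.2 (by nlinarith)).ne']
    _ ≤ ∫⁻ x in Ioc a ((a + b) / 2), ∫⁻ y in Ioc x b, ENNReal.ofReal (F x y) :=
        setLIntegral_mono' measurableSet_Ioc hinner
    _ ≤ _ := lintegral_mono' (Measure.restrict_mono (Ioc_subset_Ioc_right (by linarith)) le_rfl)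
        le_rfl

lemma log_div_sub_mul_le_integral {h : ℝ → ℝ} {a x y M : ℝ} (hxa : a < x) (hxy : x ≤ y)
    (hh : ContinuousOn h (Icc x y)) (hM : ∀ s ∈ Icc x y, (s - a)⁻¹ - M ≤ h s) :
    Real.log ((y - a) / (x - a)) - M * (y - x) ≤ ∫ s in x..y, h s := by
  have hinv : ContinuousOn (fun s : ℝ => (s - a)⁻¹) (Icc x y) :=
    (continuousOn_id.sub continuousOn_const).inv₀ fun s hs => (sub_pos.2 (hxa.trans_le hs.1)).ne'
  have hint := hinv.intervalIntegrable_of_Icc (μ := volume) hxy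
  calc Real.log ((y - a) / (x - a)) - M * (y - x) = ∫ s in x..y, ((s - a)⁻¹ - M) := by
        rw [intervalIntegral.integral_sub hint (intervalIntegrable_const (μ := volume)),
          intervalIntegral.integral_comp_sub_right (fun s => s⁻¹),
          integral_inv_of_pos (by linarith) (by linarith), intervalIntegral.integral_const,
          smul_eq_mul]
        ring
    _ ≤ _ := intervalIntegral.integral_mono_on hxy
        (hint.sub (intervalIntegrable_const (μ := volume))) (hh.intervalIntegrable_of_Icc hxy) hM

lemma lintegral_speed_scale_eq_top {g h : ℝ → ℝ} {a b C M : ℝ} (hab : a < b) (hC : 0 < C)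
    (hM : 0 ≤ M) (hh : ContinuousOn h (Ioc a b))
    (hg : ∀ y ∈ Ioc a b, 0 < g y ∧ g y ≤ C * (y - a))
    (hhM : ∀ s ∈ Ioc a b, (s - a)⁻¹ - M ≤ h s) :
    ∫⁻ x in Ioc a b, ∫⁻ y in Ioc x b,
      ENNReal.ofReal ((1 / g y) * Real.exp (∫ s in x..y, h s)) = ⊤ := by
  refine lintegral_Ioc_lintegral_Ioc_eq_top hab
    (K := Real.exp (-(M * (b - a))) / C) (by positivity) fun x y hx hxy hyb => ?_
  have hIcc : Icc x y ⊆ Ioc a b := Icc_subset_Ioc_iff hxy.le |>.2 ⟨hx, hyb⟩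
  have hlog := log_div_sub_mul_le_integral hx hxy.le (hh.mono hIcc) fun s hs => hhM s (hIcc hs)
  obtain ⟨hgy, hgyC⟩ := hg y ⟨hx.trans hxy, hyb⟩
  have hxa : 0 < x - a := sub_pos.2 hx
  have hya : 0 < y - a := sub_pos.2 (hx.trans hxy)
  calc Real.exp (-(M * (b - a))) / C / (x - a)
      = 1 / (C * (y - a)) * ((y - a) / (x - a) * Real.exp (-(M * (b - a)))) := by
        field_simp
    _ ≤ 1 / g y * ((y - a) / (x - a) * Real.exp (-(M * (y - x)))) := by
        gcongr
    _ = 1 / g y * Real.exp (Real.log ((y - a) / (x - a)) - M * (y - x)) := by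
        rw [Real.exp_sub, Real.exp_log (by positivity), Real.exp_neg,
          div_eq_mul_inv _ (Real.exp _)]
    _ ≤ _ := by gcongr

theorem speed_scale_integral_infinite_of_large_drift_general (a δ₀ : ℝ) (hδ₀ : 0 < δ₀)
    (f g : ℝ → ℝ) (f' g' : ℝ)
    (hfc : ContinuousOn f (Set.Icc a (a + δ₀)))
    (hf : HasDerivWithinAt f f' (Set.Ici a) a)
    (hgC2 : ContDiffOn ℝ 2 g (Set.Icc a (a + δ₀)))
    (hga : g a = 0)
    (hg : HasDerivWithinAt g g' (Set.Ici a) a)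
    (hg' : 0 < g')
    (hcond : g' ≤ f a) :
    ∃ δ₁, 0 < δ₁ ∧ δ₁ ≤ δ₀ ∧ ∀ δ, 0 < δ → δ ≤ δ₁ →
      (∫⁻ x in Set.Ioc a (a + δ), ∫⁻ y in Set.Ioc x (a + δ),
        ENNReal.ofReal ((1 / g y) * Real.exp (∫ s in x..y, f s / g s))) = ⊤ := by
  obtain ⟨M, hM, hnear⟩ :=
    exists_eventually_inv_sub_le_div (by linarith) hf hgC2 hga hg hg' hcond
  obtain ⟨u, hau, hu⟩ := mem_nhdsGT_iff_exists_Ioc_subset.1 hnear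
  refine ⟨min δ₀ (u - a), lt_min hδ₀ (sub_pos.2 hau), min_le_left _ _, fun δ hδ hδu => ?_⟩
  have hu' : Ioc a (a + δ) ⊆ Ioc a u :=
    Ioc_subset_Ioc_right (by linarith [min_le_right δ₀ (u - a)])
  have hδ₀' : Ioc a (a + δ) ⊆ Icc a (a + δ₀) :=
    Ioc_subset_Icc_self.trans (Icc_subset_Icc_right (by linarith [min_le_left δ₀ (u - a)]))
  refine lintegral_speed_scale_eq_top (by linarith) (by linarith) (by positivity) ?_
    (fun y hy => ⟨(hu (hu' hy)).1, (hu (hu' hy)).2.1⟩) fun s hs => (hu (hu' hs)).2.2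
  exact (hfc.mono hδ₀').div (hgC2.continuousOn.mono hδ₀') fun s hs => (hu (hu' hs)).1.ne'

/-- Inaccessibility of the boundary in the case `f a ≥ g' a > 0`: the speed/scale
iterated integral `I(δ) = ∫ₐ^{a+δ} ∫ₓ^{a+δ} (1/g(y)) exp(∫ₓ^y f/g) dy dx` is
infinite for every sufficiently small `δ ∈ (0, δ₀]`. -/
theorem speed_scale_integral_infinite_of_large_drift (a δ₀ : ℝ) (hδ₀ : 0 < δ₀)
    (f g : ℝ → ℝ) (f' g' : ℝ)
    (hfc : ContinuousOn f (Set.Icc a (a + δ₀)))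
    (hf : HasDerivWithinAt f f' (Set.Ici a) a)
    (hfa : 0 < f a)
    (hgC2 : ContDiffOn ℝ 2 g (Set.Icc a (a + δ₀)))
    (hga : g a = 0)
    (hg : HasDerivWithinAt g g' (Set.Ici a) a)
    (hg' : 0 < g')
    (hgpos : ∀ y ∈ Set.Ioc a (a + δ₀), 0 < g y)
    (hcond : g' ≤ f a) :
    ∃ δ₁, 0 < δ₁ ∧ δ₁ ≤ δ₀ ∧ ∀ δ, 0 < δ → δ ≤ δ₁ →
      (∫⁻ x in Set.Ioc a (a + δ), ∫⁻ y in Set.Ioc x (a + δ),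
        ENNReal.ofReal ((1 / g y) * Real.exp (∫ s in x..y, f s / g s))) = ⊤ :=
  speed_scale_integral_infinite_of_large_drift_general a δ₀ hδ₀ f g f' g' hfc hf hgC2 hga hg hg'
    hcond
end

section
/- Let a ∈ ℝ, δ₀ > 0, and let f, g : [a, a + δ₀] → ℝ with f continuous, f differentiable at a (from the right), f(a) > 0, g twice continuously differentiable, g(a) = 0, g'(a) > 0, and g(y) > 0 for all y ∈ (a, a + δ₀]. If f(a) < g'(a), then there exists δ ∈ (0, δ₀] such that the iterated integral I(δ) := ∫ₐ^{a+δ} ∫ₓ^{a+δ} (1/g(y)) · exp(∫ₓ^y f(s)/g(s) ds) dy dx is finite. -/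
open MeasureTheory Set Filter Real Topology
open scoped ENNReal

/-! Since `g s ≈ g' (s - a)` near `a`, any `p` with `f a / g' < p < 1` bounds the drift ratio
by `f s / g s ≤ p / (s - a)` on a short interval `(a, a + δ]`. Then
`exp (∫ₓʸ f/g) ≤ ((y - a)/(x - a))^p`, so the integrand is at most
`(2 / g') (x - a)^(-p) (y - a)^(p - 1)`, a product of two powers that are integrable at `a`
because `0 < p < 1`. -/

theorem integrableOn_Ioc_rpow_sub (a b : ℝ) {r : ℝ} (hr : -1 < r) :
    IntegrableOn (fun t : ℝ => (t - a) ^ r) (Ioc a b) := by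
  have h : IntervalIntegrable (fun t : ℝ => (t - a) ^ r) volume a b := by
    simpa using
      (intervalIntegral.intervalIntegrable_rpow' (a := 0) (b := b - a) hr).comp_sub_right a
  exact h.1

theorem lintegral_Ioc_Ioc_lt_top_of_le_mul {a b : ℝ} {F : ℝ → ℝ → ℝ≥0∞}
    {φ ψ : ℝ → ℝ≥0∞} (hψm : Measurable ψ) (hφ : ∫⁻ x in Ioc a b, φ x < ⊤)
    (hψ : ∫⁻ y in Ioc a b, ψ y < ⊤)
    (hF : ∀ x ∈ Ioc a b, ∀ y ∈ Ioc x b, F x y ≤ φ x * ψ y) :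
    ∫⁻ x in Ioc a b, ∫⁻ y in Ioc x b, F x y < ⊤ := by
  calc ∫⁻ x in Ioc a b, ∫⁻ y in Ioc x b, F x y
      ≤ ∫⁻ x in Ioc a b, φ x * ∫⁻ y in Ioc a b, ψ y := by
        refine lintegral_mono_ae ((ae_restrict_mem measurableSet_Ioc).mono fun x hx => ?_)
        calc ∫⁻ y in Ioc x b, F x y
            ≤ ∫⁻ y in Ioc x b, φ x * ψ y :=
              lintegral_mono_ae ((ae_restrict_mem measurableSet_Ioc).mono (hF x hx))
          _ ≤ ∫⁻ y in Ioc a b, φ x * ψ y := lintegral_mono_set (Ioc_subset_Ioc_left hx.1.le)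
          _ = φ x * ∫⁻ y in Ioc a b, ψ y := lintegral_const_mul _ hψm
    _ = (∫⁻ x in Ioc a b, φ x) * ∫⁻ y in Ioc a b, ψ y := lintegral_mul_const' _ _ hψ.ne
    _ < ⊤ := ENNReal.mul_lt_top hφ hψ

theorem tendsto_div_sub_nhdsGT_of_hasDerivWithinAt_s7 {g : ℝ → ℝ} {a g' : ℝ}
    (hg : HasDerivWithinAt g g' (Ici a) a) (hga : g a = 0) :
    Tendsto (fun s => g s / (s - a)) (𝓝[>] a) (𝓝 g') :=
  ((hasDerivWithinAt_iff_tendsto_slope' self_notMem_Ioi).1 hg.Ioi_of_Ici).congr fun s => by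
    simp [slope_def_field, hga]

theorem eventually_mul_sub_lt_of_hasDerivWithinAt {g : ℝ → ℝ} {a g' c : ℝ}
    (hg : HasDerivWithinAt g g' (Ici a) a) (hga : g a = 0) (hc : c < g') :
    ∀ᶠ s in 𝓝[>] a, c * (s - a) < g s := by
  filter_upwards [(tendsto_div_sub_nhdsGT_of_hasDerivWithinAt_s7 hg hga).eventually
    (eventually_gt_nhds hc), self_mem_nhdsWithin] with s hs hsa
  rwa [lt_div_iff₀ (sub_pos.2 hsa)] at hs

theorem eventually_div_lt_div_sub_of_hasDerivWithinAt {f g : ℝ → ℝ} {a g' p : ℝ}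
    (hf : ContinuousWithinAt f (Ioi a) a) (hg : HasDerivWithinAt g g' (Ici a) a)
    (hga : g a = 0) (hg' : g' ≠ 0) (hp : f a / g' < p) :
    ∀ᶠ s in 𝓝[>] a, f s / g s < p / (s - a) := by
  have hlim : Tendsto (fun s => f s / (g s / (s - a))) (𝓝[>] a) (𝓝 (f a / g')) :=
    Tendsto.div hf (tendsto_div_sub_nhdsGT_of_hasDerivWithinAt_s7 hg hga) hg'
  filter_upwards [hlim.eventually (eventually_lt_nhds hp), self_mem_nhdsWithin] with s hs hsa
  have hsa : 0 < s - a := sub_pos.2 hsa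
  calc f s / g s = f s / (g s / (s - a)) / (s - a) := by
        rw [div_div_eq_mul_div, mul_div_right_comm, mul_div_cancel_right₀ _ hsa.ne']
    _ < p / (s - a) := div_lt_div_of_pos_right hs hsa

theorem exists_forall_Ioc_of_eventually_nhdsGT {P : ℝ → Prop} {a δ₀ : ℝ}
    (hδ₀ : 0 < δ₀) (h : ∀ᶠ s in 𝓝[>] a, P s) :
    ∃ δ, 0 < δ ∧ δ ≤ δ₀ ∧ ∀ s ∈ Ioc a (a + δ), P s := by
  obtain ⟨u, hu, hsub⟩ := mem_nhdsGT_iff_exists_Ioc_subset.1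
    (h.and (Ioc_mem_nhdsGT (lt_add_of_pos_right a hδ₀)))
  have hu₀ : u ≤ a + δ₀ := (hsub ⟨hu, le_rfl⟩).2.2
  exact ⟨u - a, sub_pos.2 hu, by linarith, fun s hs => (hsub (by simpa using hs)).1⟩

theorem integral_le_mul_log_of_le_div_sub {h : ℝ → ℝ} {a x y p : ℝ}
    (hax : a < x) (hxy : x ≤ y) (hh : IntervalIntegrable h volume x y)
    (hle : ∀ s ∈ Icc x y, h s ≤ p / (s - a)) :
    ∫ s in x..y, h s ≤ p * log ((y - a) / (x - a)) := by
  have hpos : ∀ s ∈ Icc x y, 0 < s - a := fun s hs => sub_pos.2 (hax.trans_le hs.1)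
  have hbound : IntervalIntegrable (fun s => p / (s - a)) volume x y :=
    ContinuousOn.intervalIntegrable_of_Icc hxy <|
      continuousOn_const.div (continuousOn_id.sub continuousOn_const) fun s hs => (hpos s hs).ne'
  calc ∫ s in x..y, h s ≤ ∫ s in x..y, p / (s - a) :=
        intervalIntegral.integral_mono_on hxy hh hbound hle
    _ = p * log ((y - a) / (x - a)) := by
      simp_rw [div_eq_mul_inv p]
      rw [intervalIntegral.integral_const_mul,
        intervalIntegral.integral_comp_sub_right (fun t => t⁻¹),
        integral_inv_of_pos (sub_pos.2 hax) (sub_pos.2 (hax.trans_le hxy))]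

theorem speed_scale_integrand_le {f g : ℝ → ℝ} {a b c p : ℝ} (hc : 0 < c)
    (hfg : ContinuousOn (fun s => f s / g s) (Ioc a b))
    (hg : ∀ s ∈ Ioc a b, c * (s - a) ≤ g s)
    (hdrift : ∀ s ∈ Ioc a b, f s / g s ≤ p / (s - a)) :
    ∀ x ∈ Ioc a b, ∀ y ∈ Ioc x b,
      1 / g y * exp (∫ s in x..y, f s / g s) ≤
        (x - a) ^ (-p) * (c⁻¹ * (y - a) ^ (p - 1)) := by
  intro x hx y hy
  have hX : 0 < x - a := sub_pos.2 hx.1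
  have hY : 0 < y - a := sub_pos.2 (hx.1.trans hy.1)
  have hIcc : Icc x y ⊆ Ioc a b := fun s hs => ⟨hx.1.trans_le hs.1, hs.2.trans hy.2⟩
  have hlog := integral_le_mul_log_of_le_div_sub hx.1 hy.1.le
    ((hfg.mono hIcc).intervalIntegrable_of_Icc hy.1.le) fun s hs => hdrift s (hIcc hs)
  have hexp : exp (∫ s in x..y, f s / g s) ≤ ((y - a) / (x - a)) ^ p := by
    rw [rpow_def_of_pos (div_pos hY hX), mul_comm]
    exact exp_le_exp.2 hlog
  have hgy : 1 / g y ≤ 1 / (c * (y - a)) :=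
    one_div_le_one_div_of_le (by positivity) (hg y ⟨hx.1.trans hy.1, hy.2⟩)
  calc 1 / g y * exp (∫ s in x..y, f s / g s) ≤ 1 / (c * (y - a)) * ((y - a) / (x - a)) ^ p :=
        mul_le_mul hgy hexp (exp_pos _).le (by positivity)
    _ = (x - a) ^ (-p) * (c⁻¹ * (y - a) ^ (p - 1)) := by
      rw [div_rpow hY.le hX.le, rpow_sub hY, rpow_one, rpow_neg hX.le]
      field_simp

theorem speed_scale_integral_finite_of_small_drift_general (a δ₀ : ℝ) (hδ₀ : 0 < δ₀)
    (f g : ℝ → ℝ) (g' : ℝ)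
    (hfc : ContinuousOn f (Set.Icc a (a + δ₀)))
    (hgC2 : ContDiffOn ℝ 2 g (Set.Icc a (a + δ₀)))
    (hga : g a = 0)
    (hg : HasDerivWithinAt g g' (Set.Ici a) a)
    (hg' : 0 < g')
    (hcond : f a < g') :
    ∃ δ, 0 < δ ∧ δ ≤ δ₀ ∧
      (∫⁻ x in Set.Ioc a (a + δ), ∫⁻ y in Set.Ioc x (a + δ),
        ENNReal.ofReal ((1 / g y) * Real.exp (∫ s in x..y, f s / g s))) < ⊤ := by
  obtain ⟨p, hp, hp1⟩ := exists_between (max_lt ((div_lt_one hg').2 hcond) one_pos)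
  have hp0 : 0 < p := (le_max_right _ _).trans_lt hp
  have hf : ContinuousWithinAt f (Ioi a) a :=
    (hfc.continuousWithinAt (left_mem_Icc.2 (by linarith))).mono_of_mem_nhdsWithin
      (Icc_mem_nhdsGT (lt_add_of_pos_right a hδ₀))
  obtain ⟨δ, hδ, hδδ₀, hnear⟩ := exists_forall_Ioc_of_eventually_nhdsGT hδ₀
    ((eventually_mul_sub_lt_of_hasDerivWithinAt hg hga (half_lt_self hg')).and
      (eventually_div_lt_div_sub_of_hasDerivWithinAt hf hg hga hg'.ne'
        ((le_max_left _ _).trans_lt hp)))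
  have hsub : Ioc a (a + δ) ⊆ Icc a (a + δ₀) :=
    Ioc_subset_Icc_self.trans (Icc_subset_Icc_right (by linarith))
  have hcont : ContinuousOn (fun s => f s / g s) (Ioc a (a + δ)) :=
    (hfc.mono hsub).div (hgC2.continuousOn.mono hsub) fun s hs =>
      ((mul_pos (half_pos hg') (sub_pos.2 hs.1)).trans (hnear s hs).1).ne'
  refine ⟨δ, hδ, hδδ₀, lintegral_Ioc_Ioc_lt_top_of_le_mul
    (φ := fun x => ENNReal.ofReal ((x - a) ^ (-p)))
    (ψ := fun y => ENNReal.ofReal ((g' / 2)⁻¹ * (y - a) ^ (p - 1))) (by fun_prop)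
    (integrableOn_Ioc_rpow_sub _ _ (by linarith)).lintegral_lt_top
    ((integrableOn_Ioc_rpow_sub _ _ (by linarith)).const_mul _).lintegral_lt_top
    fun x hx y hy => ?_⟩
  rw [← ENNReal.ofReal_mul (rpow_nonneg (sub_pos.2 hx.1).le _)]
  exact ENNReal.ofReal_le_ofReal (speed_scale_integrand_le (half_pos hg') hcont
    (fun s hs => (hnear s hs).1.le) (fun s hs => (hnear s hs).2.le) x hx y hy)

/-- Accessibility of the boundary in the case `0 < f a < g' a`: the speed/scale
iterated integral `I(δ) = ∫ₐ^{a+δ} ∫ₓ^{a+δ} (1/g(y)) exp(∫ₓ^y f/g) dy dx` is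
finite for some `δ ∈ (0, δ₀]`. -/
theorem speed_scale_integral_finite_of_small_drift (a δ₀ : ℝ) (hδ₀ : 0 < δ₀)
    (f g : ℝ → ℝ) (f' g' : ℝ)
    (hfc : ContinuousOn f (Set.Icc a (a + δ₀)))
    (hf : HasDerivWithinAt f f' (Set.Ici a) a)
    (hfa : 0 < f a)
    (hgC2 : ContDiffOn ℝ 2 g (Set.Icc a (a + δ₀)))
    (hga : g a = 0)
    (hg : HasDerivWithinAt g g' (Set.Ici a) a)
    (hg' : 0 < g')
    (hgpos : ∀ y ∈ Set.Ioc a (a + δ₀), 0 < g y)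
    (hcond : f a < g') :
    ∃ δ, 0 < δ ∧ δ ≤ δ₀ ∧
      (∫⁻ x in Set.Ioc a (a + δ), ∫⁻ y in Set.Ioc x (a + δ),
        ENNReal.ofReal ((1 / g y) * Real.exp (∫ s in x..y, f s / g s))) < ⊤ :=
  speed_scale_integral_finite_of_small_drift_general a δ₀ hδ₀ f g g' hfc hgC2 hga hg hg' hcond
end

section
/- Let K := ∫₀¹ e^y log((1 − y)/y) dy and define T : [0, 1] → ℝ by T(x) = ((e^{−x} − 1)/(e − 1))·K + e^{−x}·∫₀^x e^y log((1 − y)/y) dy. Then: (i) T(0) = 0 and T(1) = 0; (ii) T is twice differentiable on (0, 1) and satisfies x(1 − x)·(T'(x) + T''(x)) = −1 for all x ∈ (0, 1); (iii) T is bounded on [0, 1]. -/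
/-!
Write `F x = ∫₀ˣ e^y log((1-y)/y) dy` and `A = K/(e-1)`, so that `T x = e^{-x}(A + F x) - A`.
Differentiating gives `T' = log((1-x)/x) - (T + A)`, hence
`T' + T'' = (log((1-x)/x))' = -1/(x(1-x))`.
The integrand is integrable because `log((1-y)/y) = log(1-y) - log y` identically (also at the
junk points `y = 0, 1`), so `F` is continuous and `T` is bounded on the compact `[0,1]`.
-/

open Real Set Filter Topology

theorem Real.log_one_sub_div (y : ℝ) : log ((1 - y) / y) = log (1 - y) - log y := by
  rcases eq_or_ne y 0 with rfl | hy
  · simp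
  rcases eq_or_ne (1 - y) 0 with h1 | h1
  · simp [show y = 1 by linarith]
  exact log_div h1 hy

theorem intervalIntegrable_exp_mul_log_one_sub_div (a b : ℝ) :
    IntervalIntegrable (fun y => exp y * log ((1 - y) / y)) MeasureTheory.volume a b := by
  simp only [log_one_sub_div]
  have hlog1 : IntervalIntegrable (fun y => log (1 - y)) MeasureTheory.volume a b := by
    simpa using
      (intervalIntegral.intervalIntegrable_log' (a := 1 - a) (b := 1 - b)).comp_sub_left 1
  have hlog := hlog1.sub intervalIntegral.intervalIntegrable_log'
  exact hlog.continuousOn_mul continuous_exp.continuousOn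

theorem hasDerivAt_log_one_sub_div {x : ℝ} (hx : x ∈ Ioo (0 : ℝ) 1) :
    HasDerivAt (fun y => log ((1 - y) / y)) (-(x * (1 - x))⁻¹) x := by
  have hx0 : x ≠ 0 := hx.1.ne'
  have hx1 : 1 - x ≠ 0 := sub_ne_zero.mpr hx.2.ne'
  simp only [log_one_sub_div]
  refine ((((hasDerivAt_id' x).const_sub 1).log hx1).sub (hasDerivAt_log hx0)).congr_deriv ?_
  field_simp
  ring

theorem hasDerivAt_integral_exp_mul_log_one_sub_div {x : ℝ} (hx : x ∈ Ioo (0 : ℝ) 1) :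
    HasDerivAt (fun u => ∫ y in (0 : ℝ)..u, exp y * log ((1 - y) / y))
      (exp x * log ((1 - x) / x)) x := by
  have hcont : ContinuousAt (fun y => exp y * log ((1 - y) / y)) x := by
    have : (1 - x) / x ≠ 0 := div_ne_zero (sub_ne_zero.mpr hx.2.ne') hx.1.ne'
    fun_prop (disch := first | exact this | exact hx.1.ne')
  exact intervalIntegral.integral_hasDerivAt_right
    (intervalIntegrable_exp_mul_log_one_sub_div 0 x)
    (by fun_prop : Measurable _).stronglyMeasurable.stronglyMeasurableAtFilter hcont

theorem HasDerivAt.exp_neg_mul {F : ℝ → ℝ} {g x : ℝ}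
    (hF : HasDerivAt F (Real.exp x * g) x) :
    HasDerivAt (fun z => Real.exp (-z) * F z) (g - Real.exp (-x) * F x) x := by
  refine (((hasDerivAt_neg x).exp).mul hF).congr_deriv ?_
  rw [← mul_assoc, ← Real.exp_add, neg_add_cancel, Real.exp_zero]
  ring

theorem deriv_add_deriv_deriv_of_hasDerivAt_sub {T L : ℝ → ℝ} {x L' : ℝ}
    (hT : ∀ᶠ z in 𝓝 x, HasDerivAt T (L z - T z) z) (hL : HasDerivAt L L' x) :
    DifferentiableAt ℝ T x ∧ DifferentiableAt ℝ (deriv T) x ∧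
      deriv T x + deriv (deriv T) x = L' := by
  have hTx : HasDerivAt T (L x - T x) x := hT.self_of_nhds
  have hderiv : deriv T =ᶠ[𝓝 x] fun z => L z - T z := hT.mono fun z hz => hz.deriv
  have hT' : HasDerivAt (deriv T) (L' - (L x - T x)) x :=
    (hL.sub hTx).congr_of_eventuallyEq hderiv
  refine ⟨hTx.differentiableAt, hT'.differentiableAt, ?_⟩
  rw [hTx.deriv, hT'.deriv]
  ring

/-- The mean absorption time for the SDE `dX = X(1−X) dt + √(2X(1−X)) dW`:
`T x = ((e^{−x} − 1)/(e − 1))·K + e^{−x}·∫₀ˣ e^y log((1−y)/y) dy` vanishes at `0`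
and `1`, solves `x(1−x)(T' + T'') = −1` on `(0,1)`, and is bounded on `[0,1]`. -/
theorem mean_absorption_time_with_drift (K : ℝ)
    (hK : K = ∫ y in (0:ℝ)..1, Real.exp y * Real.log ((1 - y) / y))
    (T : ℝ → ℝ)
    (hT : ∀ x, T x = ((Real.exp (-x) - 1) / (Real.exp 1 - 1)) * K +
      Real.exp (-x) * ∫ y in (0:ℝ)..x, Real.exp y * Real.log ((1 - y) / y)) :
    T 0 = 0 ∧ T 1 = 0 ∧
    (∀ x ∈ Set.Ioo (0:ℝ) 1, DifferentiableAt ℝ T x ∧ DifferentiableAt ℝ (deriv T) x ∧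
      x * (1 - x) * (deriv T x + deriv (deriv T) x) = -1) ∧
    ∃ M, ∀ x ∈ Set.Icc (0:ℝ) 1, |T x| ≤ M := by
  set F : ℝ → ℝ := fun u => ∫ y in (0:ℝ)..u, exp y * log ((1 - y) / y)
  set A := K / (exp 1 - 1)
  have he : exp 1 - 1 ≠ 0 := (sub_pos.mpr (one_lt_exp_iff.mpr one_pos)).ne'
  have hTF : T = fun x => exp (-x) * (A + F x) - A := by
    funext x; rw [hT x]; ring
  subst hTF
  refine ⟨by simp [F], ?_, fun x hx => ?_, ?_⟩
  · have : exp (-1) * exp 1 = 1 := by rw [← exp_add]; norm_num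
    simp only [F, ← hK, A]
    field_simp
    linear_combination K * this
  · have hT' : ∀ᶠ z in 𝓝 x, HasDerivAt (fun x => exp (-x) * (A + F x) - A)
        ((log ((1 - z) / z) - A) - (exp (-z) * (A + F z) - A)) z := by
      filter_upwards [Ioo_mem_nhds hx.1 hx.2] with z hz
      refine ((HasDerivAt.exp_neg_mul
        ((hasDerivAt_integral_exp_mul_log_one_sub_div hz).const_add A)).sub_const A).congr_deriv ?_
      ring
    obtain ⟨hd, hdd, hsum⟩ :=
      deriv_add_deriv_deriv_of_hasDerivAt_sub hT' ((hasDerivAt_log_one_sub_div hx).sub_const A)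
    refine ⟨hd, hdd, ?_⟩
    rw [hsum]
    have : x * (1 - x) ≠ 0 := mul_ne_zero hx.1.ne' (sub_ne_zero.mpr hx.2.ne')
    rw [mul_neg, mul_inv_cancel₀ this]
  · have hF : Continuous F :=
      intervalIntegral.continuous_primitive intervalIntegrable_exp_mul_log_one_sub_div 0
    exact isCompact_Icc.exists_bound_of_continuousOn
      (by fun_prop : Continuous fun x => exp (-x) * (A + F x) - A).continuousOn
end
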